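/- arXiv:2308.07064 — 7 statements merged into one kernel-verified Lean document; each statement's English description precedes it below -/
import Mathlib

section
/- Let ⫫ satisfy finite character (if a ⫫_C B for all finite a ⊆ A then A ⫫_C B), base monotonicity, and weak locality (for every finite a and every B there exists a finite b ⊆ B with a ⫫_b B). Then ⫫ satisfies local character: for every A there is a cardinal κ(A) such that for every B there is B₀ ⊆ B with |B₀| < κ(A) and A ⫫_{B₀} B. -/
/-! For each finite `a ⊆ A`, weak locality gives a finite `b_a ⊆ B` with `a ⫫_{b_a} B`. Base
monotonicity lifts this to `a ⫫_{B₀} B` for `B₀ = ⋃ₐ b_a`, and finite character then gives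
`A ⫫_{B₀} B`. As a union of finite sets indexed by the finite subsets of `A`, `B₀` has cardinality
at most `#{a ⊆ A finite} * ℵ₀`, which depends on `A` only. -/

universe u

open Cardinal

theorem Cardinal.mk_iUnion_le_mul_aleph0_of_finite {α ι : Type u} {s : ι → Set α}
    (hs : ∀ i, (s i).Finite) : #(⋃ i, s i) ≤ #ι * ℵ₀ :=
  (mk_iUnion_le s).trans <| by
    gcongr
    exact ciSup_le' fun i => (hs i).lt_aleph0.le

theorem ind_iUnion_of_finiteCharacter_of_baseMono {S : Type*}
    {ind : Set S → Set S → Set S → Prop}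
    (hfin : ∀ A C B : Set S, (∀ a : Set S, a ⊆ A → a.Finite → ind a C B) → ind A C B)
    (hbmon : ∀ A C B D : Set S, C ⊆ B → B ⊆ D → ind A C D → ind A B D)
    {A B : Set S} (b : {a : Set S // a ⊆ A ∧ a.Finite} → Set S) (hbB : ∀ i, b i ⊆ B)
    (hb : ∀ i, ind i.1 (b i) B) : ind A (⋃ i, b i) B :=
  hfin A _ B fun a haA ha =>
    hbmon a _ _ B (Set.subset_iUnion b ⟨a, haA, ha⟩) (Set.iUnion_subset hbB) (hb ⟨a, haA, ha⟩)

/-- finite character + base monotonicity + weak locality imply local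
character: for every `A` there is a cardinal `κ` such that for all `B` there is
`B₀ ⊆ B` with `|B₀| < κ` and `A ⫫_{B₀} B`. -/
theorem stmt3 {S : Type u} (ind : Set S → Set S → Set S → Prop)
    (hfin : ∀ A C B : Set S, (∀ a : Set S, a ⊆ A → a.Finite → ind a C B) → ind A C B)
    (hbmon : ∀ A C B D : Set S, C ⊆ B → B ⊆ D → ind A C D → ind A B D)
    (hwloc : ∀ a : Set S, a.Finite → ∀ B : Set S, ∃ b : Set S, b ⊆ B ∧ b.Finite ∧ ind a b B) :
    ∀ A : Set S, ∃ κ : Cardinal.{u}, ∀ B : Set S,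
      ∃ B₀ : Set S, B₀ ⊆ B ∧ Cardinal.mk B₀ < κ ∧ ind A B₀ B := by
  intro A
  refine ⟨Order.succ (#{a : Set S // a ⊆ A ∧ a.Finite} * ℵ₀), fun B => ?_⟩
  choose b hbB hbfin hb using fun i : {a : Set S // a ⊆ A ∧ a.Finite} => hwloc i.1 i.2.2 B
  exact ⟨⋃ i, b i, Set.iUnion_subset hbB,
    (mk_iUnion_le_mul_aleph0_of_finite hbfin).trans_lt (Order.lt_succ _),
    ind_iUnion_of_finiteCharacter_of_baseMono hfin hbmon b hbB hb⟩
end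

section
/- Let (S, cl) be a pregeometry. If a is a single element with a ∉ cl(B), then for every C ⊆ B we have cl({a} ∪ C) ∩ cl(B ∪ C) = cl(C) (i.e., a ⫫ᵃ_C B). -/
/-!
If `x ∈ cl({a} ∪ C) ∩ cl B` but `x ∉ cl C`, exchange gives `a ∈ cl(C ∪ {x})`, and `C ∪ {x} ⊆ cl B`
forces `a ∈ cl B`. The reverse inclusion is monotonicity.
-/

section Pregeometry

variable {S : Type*} {cl : Set S → Set S}

theorem cl_subset_cl_of_subset_cl (hmono : ∀ A B : Set S, A ⊆ B → cl A ⊆ cl B)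
    (hidem : ∀ A : Set S, cl (cl A) = cl A) {A B : Set S} (h : A ⊆ cl B) : cl A ⊆ cl B :=
  hidem B ▸ hmono A (cl B) h

theorem mem_cl_of_mem_cl_union_singleton_of_notMem (hsub : ∀ A : Set S, A ⊆ cl A)
    (hmono : ∀ A B : Set S, A ⊆ B → cl A ⊆ cl B) (hidem : ∀ A : Set S, cl (cl A) = cl A)
    (hexch : ∀ (A : Set S) (a b : S), a ∈ cl (A ∪ {b}) → a ∉ cl A → b ∈ cl (A ∪ {a}))
    {a x : S} {B C : Set S} (hCB : C ⊆ B) (hxa : x ∈ cl (C ∪ {a})) (hxC : x ∉ cl C)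
    (hxB : x ∈ cl B) : a ∈ cl B := by
  have haCx : a ∈ cl (C ∪ {x}) := hexch C x a hxa hxC
  have hCx : C ∪ {x} ⊆ cl B :=
    Set.union_subset (hCB.trans (hsub B)) (Set.singleton_subset_iff.mpr hxB)
  exact cl_subset_cl_of_subset_cl hmono hidem hCx haCx

end Pregeometry

theorem stmt5_general {S : Type*} (cl : Set S → Set S)
    (hsub : ∀ A : Set S, A ⊆ cl A)
    (hmono : ∀ A B : Set S, A ⊆ B → cl A ⊆ cl B)
    (hidem : ∀ A : Set S, cl (cl A) = cl A)
    (hexch : ∀ (A : Set S) (a b : S), a ∈ cl (A ∪ {b}) → a ∉ cl A → b ∈ cl (A ∪ {a}))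
    (a : S) (B : Set S) (ha : a ∉ cl B) :
    ∀ C : Set S, C ⊆ B → cl ({a} ∪ C) ∩ cl (B ∪ C) = cl C := by
  intro C hCB
  rw [Set.union_eq_self_of_subset_right hCB, Set.union_comm]
  refine Set.Subset.antisymm ?_ fun x hx ↦
    ⟨hmono C (C ∪ {a}) Set.subset_union_left hx, hmono C B hCB hx⟩
  rintro x ⟨hxa, hxB⟩
  by_contra hxC
  exact ha (mem_cl_of_mem_cl_union_singleton_of_notMem hsub hmono hidem hexch hCB hxa hxC hxB)

/-- in a pregeometry, if a singleton `a` satisfies `a ∉ cl B`, then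
for every `C ⊆ B` we have `cl({a} ∪ C) ∩ cl(B ∪ C) = cl C`, i.e. `a ⫫ᵃ_C B`. -/
theorem stmt5 {S : Type*} (cl : Set S → Set S)
    (hsub : ∀ A : Set S, A ⊆ cl A)
    (hmono : ∀ A B : Set S, A ⊆ B → cl A ⊆ cl B)
    (hidem : ∀ A : Set S, cl (cl A) = cl A)
    (hfin : ∀ (A : Set S) (x : S), x ∈ cl A → ∃ F : Finset S, ↑F ⊆ A ∧ x ∈ cl ↑F)
    (hexch : ∀ (A : Set S) (a b : S), a ∈ cl (A ∪ {b}) → a ∉ cl A → b ∈ cl (A ∪ {a}))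
    (a : S) (B : Set S) (ha : a ∉ cl B) :
    ∀ C : Set S, C ⊆ B → cl ({a} ∪ C) ∩ cl (B ∪ C) = cl C :=
  stmt5_general cl hsub hmono hidem hexch a B ha
end

section
/- Let (S, cl) be a pregeometry and A, B ⊆ S be cl-closed sets. Then dim(A ∪ B) + dim(A ∩ B) ≤ dim(A) + dim(B) (submodularity of dimension). -/
/-!
The `cl`-independent sets of a pregeometry are the independent sets of a finitary matroid
whose closure operator is `cl`. Augmentation needs no counting: if no element of a maximal
independent set `B` extends the independent set `I`, then `B ⊆ cl I`, so by idempotence every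
element lies in `cl I` and `I` is maximal too. A basis of `A` in the pregeometry is a matroid
basis of `cl A`, so the inequality is submodularity of the cardinal rank of a finitary matroid.
-/

/-- `X` is independent over `B` with respect to `cl`. -/
def IndepOver {S : Type*} (cl : Set S → Set S) (B X : Set S) : Prop :=
  ∀ a ∈ X, a ∉ cl (B ∪ (X \ {a}))

/-- `X` is a basis of `A` over `B`. -/
def IsBasisOver {S : Type*} (cl : Set S → Set S) (A B X : Set S) : Prop :=
  X ⊆ cl (A ∪ B) ∧ IndepOver cl B X ∧ A ⊆ cl (X ∪ B)

open Set Cardinal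

structure IsPregeometry {S : Type*} (cl : Set S → Set S) : Prop where
  subset_cl : ∀ A : Set S, A ⊆ cl A
  cl_mono : ∀ A B : Set S, A ⊆ B → cl A ⊆ cl B
  cl_cl : ∀ A : Set S, cl (cl A) = cl A
  exists_finset : ∀ (A : Set S) (x : S), x ∈ cl A → ∃ F : Finset S, ↑F ⊆ A ∧ x ∈ cl ↑F
  exchange : ∀ (A : Set S) (a b : S), a ∈ cl (A ∪ {b}) → a ∉ cl A → b ∈ cl (A ∪ {a})

namespace IsPregeometry

variable {S : Type*} {cl : Set S → Set S} {A I J X : Set S} {x : S}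

theorem indepOver_empty_iff : IndepOver cl ∅ I ↔ ∀ a ∈ I, a ∉ cl (I \ {a}) := by
  simp [IndepOver]

theorem indepOver_empty_of_subset (hcl : IsPregeometry cl) (hJ : IndepOver cl ∅ J)
    (hIJ : I ⊆ J) : IndepOver cl ∅ I := by
  rw [indepOver_empty_iff] at hJ ⊢
  exact fun a ha hacl ↦ hJ a (hIJ ha) (hcl.cl_mono _ _ (sdiff_subset_sdiff_left hIJ) hacl)

theorem indepOver_empty_insert_iff (hcl : IsPregeometry cl) (hI : IndepOver cl ∅ I)
    (hxI : x ∉ I) : IndepOver cl ∅ (insert x I) ↔ x ∉ cl I := by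
  rw [indepOver_empty_iff] at hI ⊢
  constructor
  · intro h hx
    exact h x (mem_insert x I) (by rwa [insert_sdiff_self_of_notMem hxI])
  · rintro hx a (rfl | haI) hacl
    · exact hx (by rwa [insert_sdiff_self_of_notMem hxI] at hacl)
    · -- `a` depends on `x` over `I \ {a}` but not without it, so `x` may be exchanged for `a`.
      have hax : a ≠ x := ne_of_mem_of_not_mem haI hxI
      rw [insert_sdiff_of_notMem _ (mt mem_singleton_iff.1 hax.symm), insert_eq, union_comm]
        at hacl
      have := hcl.exchange _ a x hacl (hI a haI)
      rw [sdiff_union_of_subset (singleton_subset_iff.2 haI)] at this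
      exact hx this

theorem indepOver_empty_of_forall_finite (hcl : IsPregeometry cl)
    (h : ∀ J ⊆ I, J.Finite → IndepOver cl ∅ J) : IndepOver cl ∅ I := by
  rw [indepOver_empty_iff]
  intro a haI hacl
  obtain ⟨F, hFI, haF⟩ := hcl.exists_finset _ a hacl
  have hF : IndepOver cl ∅ (insert a ↑F) :=
    h _ (insert_subset haI (hFI.trans sdiff_subset)) (F.finite_toSet.insert a)
  rw [indepOver_empty_iff] at hF
  exact hF a (mem_insert a _) (hcl.cl_mono _ _ (subset_sdiff_singleton (subset_insert a _)
    fun haF' ↦ (hFI haF').2 rfl) haF)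

theorem mem_cl_of_maximal (hcl : IsPregeometry cl) (hJ : Maximal (IndepOver cl ∅) J) (y : S) :
    y ∈ cl J := by
  by_cases hyJ : y ∈ J
  · exact hcl.subset_cl J hyJ
  · by_contra hy
    exact hyJ (hJ.mem_of_prop_insert ((hcl.indepOver_empty_insert_iff hJ.1 hyJ).2 hy))

theorem exists_insert_of_not_maximal (hcl : IsPregeometry cl) {B : Set S}
    (hI : IndepOver cl ∅ I) (hInot : ¬ Maximal (IndepOver cl ∅) I)
    (hB : Maximal (IndepOver cl ∅) B) : ∃ x ∈ B \ I, IndepOver cl ∅ (insert x I) := by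
  obtain ⟨e, heI, he⟩ := Set.exists_insert_of_not_maximal
    (fun _ _ hJ hIJ ↦ hcl.indepOver_empty_of_subset hJ hIJ) hI hInot
  by_contra! hBI
  have hBcl : B ⊆ cl I := by
    intro y hyB
    by_cases hyI : y ∈ I
    · exact hcl.subset_cl I hyI
    · by_contra hy
      exact hBI y ⟨hyB, hyI⟩ ((hcl.indepOver_empty_insert_iff hI hyI).2 hy)
  have hecl : e ∈ cl I := by
    rw [← hcl.cl_cl I]
    exact hcl.cl_mono _ _ hBcl (hcl.mem_cl_of_maximal hB e)
  exact (hcl.indepOver_empty_insert_iff hI heI).1 he hecl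

def matroid (hcl : IsPregeometry cl) : Matroid S :=
  (IndepMatroid.ofFinitary Set.univ (IndepOver cl ∅) (by simp [IndepOver])
    (fun _ _ hJ hIJ ↦ hcl.indepOver_empty_of_subset hJ hIJ)
    (fun _ _ hI hInot hB ↦ hcl.exists_insert_of_not_maximal hI hInot hB)
    (fun _ h ↦ hcl.indepOver_empty_of_forall_finite h) (fun _ _ ↦ subset_univ _)).matroid

instance finitary_matroid (hcl : IsPregeometry cl) : hcl.matroid.Finitary :=
  IndepMatroid.ofFinitary_finitary _ _ _ _ _ _ _

@[simp] theorem matroid_indep_iff (hcl : IsPregeometry cl) :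
    hcl.matroid.Indep I ↔ IndepOver cl ∅ I :=
  Iff.rfl

@[simp] theorem matroid_ground (hcl : IsPregeometry cl) : hcl.matroid.E = Set.univ :=
  rfl

theorem matroid_closure_of_indep (hcl : IsPregeometry cl) (hI : IndepOver cl ∅ I) :
    hcl.matroid.closure I = cl I := by
  ext x
  rw [← not_iff_not, ((hcl.matroid_indep_iff).2 hI).notMem_closure_iff (by simp),
    matroid_indep_iff]
  by_cases hxI : x ∈ I
  · simp [hxI, hcl.subset_cl I hxI]
  · simp [hxI, hcl.indepOver_empty_insert_iff hI hxI]

theorem matroid_closure (hcl : IsPregeometry cl) (X : Set S) : hcl.matroid.closure X = cl X := by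
  obtain ⟨I, hI⟩ := hcl.matroid.exists_isBasis X (by simp)
  have hIcl : hcl.matroid.closure X = cl I := by
    rw [← hI.closure_eq_closure, hcl.matroid_closure_of_indep hI.indep]
  rw [hIcl]
  refine (hcl.cl_mono _ _ hI.subset).antisymm ?_
  rw [← hcl.cl_cl I, ← hIcl]
  exact hcl.cl_mono _ _ (hcl.matroid.subset_closure X (by simp))

theorem isBasis_closure_of_isBasisOver (hcl : IsPregeometry cl) (h : IsBasisOver cl A ∅ X) :
    hcl.matroid.IsBasis X (cl A) := by
  obtain ⟨hXA, hX, hAX⟩ := h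
  simp only [union_empty] at hXA hAX
  refine ((hcl.matroid_indep_iff).2 hX).isBasis_of_subset_of_subset_closure hXA ?_
  rw [matroid_closure, ← hcl.cl_cl X]
  exact hcl.cl_mono _ _ hAX

theorem cardinalMk_eq_cRk_of_isBasisOver (hcl : IsPregeometry cl) (h : IsBasisOver cl A ∅ X) :
    #X = hcl.matroid.cRk A := by
  rw [(hcl.isBasis_closure_of_isBasisOver h).cardinalMk_eq_cRk, ← hcl.matroid_closure A,
    Matroid.cRk_closure]

end IsPregeometry

theorem stmt10_general {S : Type*} (cl : Set S → Set S)
    (hsub : ∀ A : Set S, A ⊆ cl A)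
    (hmono : ∀ A B : Set S, A ⊆ B → cl A ⊆ cl B)
    (hidem : ∀ A : Set S, cl (cl A) = cl A)
    (hfin : ∀ (A : Set S) (x : S), x ∈ cl A → ∃ F : Finset S, ↑F ⊆ A ∧ x ∈ cl ↑F)
    (hexch : ∀ (A : Set S) (a b : S), a ∈ cl (A ∪ {b}) → a ∉ cl A → b ∈ cl (A ∪ {a}))
    (A B : Set S)
    (X Y ZA ZB : Set S)
    (hX : IsBasisOver cl (A ∪ B) ∅ X) (hY : IsBasisOver cl (A ∩ B) ∅ Y)
    (hZA : IsBasisOver cl A ∅ ZA) (hZB : IsBasisOver cl B ∅ ZB) :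
    Cardinal.mk X + Cardinal.mk Y ≤ Cardinal.mk ZA + Cardinal.mk ZB := by
  have hcl : IsPregeometry cl := ⟨hsub, hmono, hidem, hfin, hexch⟩
  rw [hcl.cardinalMk_eq_cRk_of_isBasisOver hX, hcl.cardinalMk_eq_cRk_of_isBasisOver hY,
    hcl.cardinalMk_eq_cRk_of_isBasisOver hZA, hcl.cardinalMk_eq_cRk_of_isBasisOver hZB, add_comm]
  exact hcl.matroid.cRk_inter_add_cRk_union_le A B

/-- in a pregeometry, for cl-closed sets `A`, `B`,
`dim(A ∪ B) + dim(A ∩ B) ≤ dim A + dim B` (submodularity). -/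
theorem stmt10 {S : Type*} (cl : Set S → Set S)
    (hsub : ∀ A : Set S, A ⊆ cl A)
    (hmono : ∀ A B : Set S, A ⊆ B → cl A ⊆ cl B)
    (hidem : ∀ A : Set S, cl (cl A) = cl A)
    (hfin : ∀ (A : Set S) (x : S), x ∈ cl A → ∃ F : Finset S, ↑F ⊆ A ∧ x ∈ cl ↑F)
    (hexch : ∀ (A : Set S) (a b : S), a ∈ cl (A ∪ {b}) → a ∉ cl A → b ∈ cl (A ∪ {a}))
    (A B : Set S) (hA : cl A = A) (hB : cl B = B)
    (X Y ZA ZB : Set S)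
    (hX : IsBasisOver cl (A ∪ B) ∅ X) (hY : IsBasisOver cl (A ∩ B) ∅ Y)
    (hZA : IsBasisOver cl A ∅ ZA) (hZB : IsBasisOver cl B ∅ ZB) :
    Cardinal.mk X + Cardinal.mk Y ≤ Cardinal.mk ZA + Cardinal.mk ZB :=
  stmt10_general cl hsub hmono hidem hfin hexch A B X Y ZA ZB hX hY hZA hZB
end

section
/- Let cl be a closure operator, ⫫ a ternary relation, and ⫫ᴹ its monotonisation (A ⫫ᴹ_C B iff A ⫫_X B for all C ⊆ X ⊆ cl(B ∪ C)). If a relation ⫫⁰ is stronger than ⫫ (⫫⁰ implies ⫫) and ⫫⁰ satisfies right normality, right monotonicity, right closure (A ⫫⁰_C B implies A ⫫⁰_C cl(B ∪ C)), and right base monotonicity, then ⫫⁰ implies ⫫ᴹ. -/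
namespace TernaryRelation

variable {S : Type*}

lemma of_subset_right {ind0 : Set S → Set S → Set S → Prop}
    (hmon : ∀ A C B D : Set S, ind0 A C (B ∪ D) → ind0 A C B)
    {A C B D : Set S} (hBD : B ⊆ D) (h : ind0 A C D) : ind0 A C B :=
  hmon A C B D (by rwa [Set.union_eq_self_of_subset_left hBD])

lemma base_of_subset_closure {cl : Set S → Set S} {ind0 : Set S → Set S → Set S → Prop}
    (hclo : ∀ A C B : Set S, ind0 A C B → ind0 A C (cl (B ∪ C)))
    (hbmon : ∀ A C B D : Set S, C ⊆ B → B ⊆ D → ind0 A C D → ind0 A B D)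
    {A C B X : Set S} (h : ind0 A C B) (hCX : C ⊆ X) (hXcl : X ⊆ cl (B ∪ C)) :
    ind0 A X (cl (B ∪ C)) :=
  hbmon A C X _ hCX hXcl (hclo A C B h)

end TernaryRelation

open TernaryRelation in
theorem stmt12_general {S : Type*} (cl : Set S → Set S)
    (hsub : ∀ A : Set S, A ⊆ cl A)
    (ind ind0 : Set S → Set S → Set S → Prop)
    (hstr : ∀ A C B : Set S, ind0 A C B → ind A C B)
    (hmon : ∀ A C B D : Set S, ind0 A C (B ∪ D) → ind0 A C B)
    (hclo : ∀ A C B : Set S, ind0 A C B → ind0 A C (cl (B ∪ C)))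
    (hbmon : ∀ A C B D : Set S, C ⊆ B → B ⊆ D → ind0 A C D → ind0 A B D) :
    ∀ A C B : Set S, ind0 A C B →
      ∀ X : Set S, C ⊆ X → X ⊆ cl (B ∪ C) → ind A X B := by
  intro A C B h X hCX hXcl
  have hB : B ⊆ cl (B ∪ C) := Set.subset_union_left.trans (hsub _)
  exact hstr A X B <| of_subset_right hmon hB <| base_of_subset_closure hclo hbmon h hCX hXcl

/-- if `⫫⁰` is stronger than `⫫` and satisfies right normality,
right monotonicity, right closure and right base monotonicity, then `⫫⁰` is
stronger than the monotonisation `⫫ᴹ` of `⫫`. -/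
theorem stmt12 {S : Type*} (cl : Set S → Set S)
    (hsub : ∀ A : Set S, A ⊆ cl A)
    (hmono : ∀ A B : Set S, A ⊆ B → cl A ⊆ cl B)
    (hidem : ∀ A : Set S, cl (cl A) = cl A)
    (ind ind0 : Set S → Set S → Set S → Prop)
    (hstr : ∀ A C B : Set S, ind0 A C B → ind A C B)
    (hnor : ∀ A C B : Set S, ind0 A C B → ind0 A C (B ∪ C))
    (hmon : ∀ A C B D : Set S, ind0 A C (B ∪ D) → ind0 A C B)
    (hclo : ∀ A C B : Set S, ind0 A C B → ind0 A C (cl (B ∪ C)))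
    (hbmon : ∀ A C B D : Set S, C ⊆ B → B ⊆ D → ind0 A C D → ind0 A B D) :
    ∀ A C B : Set S, ind0 A C B →
      ∀ X : Set S, C ⊆ X → X ⊆ cl (B ∪ C) → ind A X B :=
  stmt12_general cl hsub ind ind0 hstr hmon hclo hbmon
end

section
/- Let (S, cl) be a pregeometry. Then the monotonisation of ⫫ᵃ equals ⫫^cl: for all A, B, C, one has (A ⫫ᵃ_X B for all X with C ⊆ X ⊆ cl(B ∪ C)) if and only if every finite subset of A independent over C remains independent over B ∪ C. -/
theorem IndepOver.anti_base {S : Type*} {cl : Set S → Set S} (hmono : Monotone cl)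
    {X Y Z : Set S} (h : IndepOver cl Y X) (hZY : Z ⊆ Y) : IndepOver cl Z X :=
  fun a ha hmem => h a ha (hmono (Set.union_subset_union_left _ hZY) hmem)

namespace ClosureOperator

variable {S : Type*} (c : ClosureOperator (Set S))

theorem exists_minimal_finset_of_mem_closure
    (hfin : ∀ (A : Set S) (x : S), x ∈ c A → ∃ F : Finset S, ↑F ⊆ A ∧ x ∈ c ↑F)
    {Y A : Set S} {d : S} (hd : d ∈ c (Y ∪ A)) :
    ∃ G : Finset S, ↑G ⊆ A ∧ Minimal (fun G : Finset S => d ∈ c (Y ∪ ↑G)) G := by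
  classical
  obtain ⟨H, hHYA, hdH⟩ := hfin _ d hd
  have hdH' : d ∈ c (Y ∪ ↑(H.filter (· ∈ A))) := by
    refine c.monotone (fun x hx => ?_) hdH
    rcases hHYA hx with hY | hA
    · exact Or.inl hY
    · exact Or.inr (by simpa using ⟨hx, hA⟩)
  obtain ⟨G, hGH, hG⟩ :=
    exists_minimal_le_of_wellFoundedLT (fun G : Finset S => d ∈ c (Y ∪ ↑G)) _ hdH'
  exact ⟨G, fun x hx => (Finset.mem_filter.mp (hGH hx)).2, hG⟩

variable {c} {Y : Set S} {d g : S} {G : Finset S}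

theorem notMem_closure_of_minimal (hG : Minimal (fun G : Finset S => d ∈ c (Y ∪ ↑G)) G)
    (hg : g ∈ G) : d ∉ c (Y ∪ (↑G \ {g})) := by
  classical
  intro hd
  have hGle := hG.le_of_le (y := G.erase g) (by simpa using hd) (G.erase_subset g)
  exact (Finset.erase_ssubset hg).not_ge hGle

theorem indepOver_of_minimal (hG : Minimal (fun G : Finset S => d ∈ c (Y ∪ ↑G)) G) :
    IndepOver c Y ↑G := by
  intro g hg hgcl
  have hYG : Y ∪ ↑G ⊆ c (Y ∪ (↑G \ {g})) :=
    calc Y ∪ ↑G ⊆ insert g (Y ∪ (↑G \ {g})) := by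
          rw [← Set.union_insert, Set.insert_sdiff_singleton]
          exact Set.union_subset_union_right _ (Set.subset_insert _ _)
      _ ⊆ c (Y ∪ (↑G \ {g})) := Set.insert_subset hgcl (c.le_closure _)
  exact notMem_closure_of_minimal hG hg (le_closure_iff.mp hYG hG.prop)

theorem mem_closure_exchange_of_minimal
    (hexch : ∀ (A : Set S) (a b : S), a ∈ c (A ∪ {b}) → a ∉ c A → b ∈ c (A ∪ {a}))
    (hG : Minimal (fun G : Finset S => d ∈ c (Y ∪ ↑G)) G) (hg : g ∈ G) :
    g ∈ c (Y ∪ (↑G \ {g}) ∪ {d}) := by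
  refine hexch _ d g (c.monotone ?_ hG.prop) (notMem_closure_of_minimal hG hg)
  rw [Set.union_assoc, Set.sdiff_union_self]
  exact Set.union_subset_union_right _ Set.subset_union_left

variable (c) {A B C : Set S}

theorem indepOver_union_of_forall_closure_inter_eq
    (hfin : ∀ (A : Set S) (x : S), x ∈ c A → ∃ F : Finset S, ↑F ⊆ A ∧ x ∈ c ↑F)
    (hexch : ∀ (A : Set S) (a b : S), a ∈ c (A ∪ {b}) → a ∉ c A → b ∈ c (A ∪ {a}))
    (h : ∀ X : Set S, C ⊆ X → X ⊆ c (B ∪ C) → c (A ∪ X) ∩ c (B ∪ X) = c X)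
    {F : Finset S} (hFA : ↑F ⊆ A) (hF : IndepOver c C ↑F) : IndepOver c (B ∪ C) ↑F := by
  intro a ha haBC
  rw [Set.union_comm B C, Set.union_right_comm] at haBC
  obtain ⟨E, hEB, hE⟩ := exists_minimal_finset_of_mem_closure c hfin haBC
  obtain ⟨e, he⟩ : E.Nonempty := by
    rw [Finset.nonempty_iff_ne_empty]
    rintro rfl
    exact hF a ha (by simpa using hE.prop)
  have hXB : C ∪ (↑E \ {e}) ⊆ c (B ∪ C) :=
    (Set.union_subset Set.subset_union_right
      (Set.sdiff_subset.trans (hEB.trans Set.subset_union_left))).trans (c.le_closure _)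
  have heA : e ∈ c (A ∪ (C ∪ (↑E \ {e}))) := by
    refine c.monotone ?_ (mem_closure_exchange_of_minimal hexch hE he)
    rintro x (((hxC | ⟨hxF, -⟩) | hxE) | rfl)
    exacts [Or.inr (Or.inl hxC), Or.inl (hFA hxF), Or.inr (Or.inr hxE), Or.inl (hFA ha)]
  have heX : e ∈ c (C ∪ (↑E \ {e})) := by
    rw [← h _ Set.subset_union_left hXB]
    exact ⟨heA, c.le_closure _ (Or.inl (hEB he))⟩
  exact indepOver_of_minimal hE e he
    (c.monotone (Set.union_subset_union_left _ Set.subset_union_left) heX)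

theorem closure_inter_eq_of_forall_indepOver_union
    (hfin : ∀ (A : Set S) (x : S), x ∈ c A → ∃ F : Finset S, ↑F ⊆ A ∧ x ∈ c ↑F)
    (hexch : ∀ (A : Set S) (a b : S), a ∈ c (A ∪ {b}) → a ∉ c A → b ∈ c (A ∪ {a}))
    (h : ∀ F : Finset S, ↑F ⊆ A → IndepOver c C ↑F → IndepOver c (B ∪ C) ↑F)
    {X : Set S} (hCX : C ⊆ X) (hX : X ⊆ c (B ∪ C)) : c (A ∪ X) ∩ c (B ∪ X) = c X := by
  refine subset_antisymm (fun d ⟨hdA, hdB⟩ => ?_)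
    (Set.subset_inter (c.monotone Set.subset_union_right) (c.monotone Set.subset_union_right))
  have hdBC : d ∈ c (B ∪ C) :=
    le_closure_iff.mp (Set.union_subset (Set.subset_union_left.trans (c.le_closure _)) hX) hdB
  rw [Set.union_comm] at hdA
  obtain ⟨G, hGA, hG⟩ := exists_minimal_finset_of_mem_closure c hfin hdA
  have hGind : IndepOver c (B ∪ C) ↑G :=
    h G hGA ((indepOver_of_minimal hG).anti_base c.monotone hCX)
  obtain rfl | ⟨g, hg⟩ := G.eq_empty_or_nonempty
  · simpa using hG.prop
  refine absurd ?_ (hGind g hg)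
  have hBC : c (B ∪ C) ⊆ c (B ∪ C ∪ (↑G \ {g})) := c.monotone Set.subset_union_left
  have hsub : X ∪ (↑G \ {g}) ∪ {d} ⊆ c (B ∪ C ∪ (↑G \ {g})) :=
    Set.union_subset
      (Set.union_subset (hX.trans hBC) (Set.subset_union_right.trans (c.le_closure _)))
      (Set.singleton_subset_iff.mpr (hBC hdBC))
  exact le_closure_iff.mp hsub (mem_closure_exchange_of_minimal hexch hG hg)

end ClosureOperator

/-- in a pregeometry, the monotonisation of `⫫ᵃ` equals `⫫^cl`:
`A ⫫ᵃ_X B` holds for all `C ⊆ X ⊆ cl(B ∪ C)` iff every finite subset of `A`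
independent over `C` stays independent over `B ∪ C`. -/
theorem stmt13 {S : Type*} (cl : Set S → Set S)
    (hsub : ∀ A : Set S, A ⊆ cl A)
    (hmono : ∀ A B : Set S, A ⊆ B → cl A ⊆ cl B)
    (hidem : ∀ A : Set S, cl (cl A) = cl A)
    (hfin : ∀ (A : Set S) (x : S), x ∈ cl A → ∃ F : Finset S, ↑F ⊆ A ∧ x ∈ cl ↑F)
    (hexch : ∀ (A : Set S) (a b : S), a ∈ cl (A ∪ {b}) → a ∉ cl A → b ∈ cl (A ∪ {a})) :
    ∀ A B C : Set S,
      (∀ X : Set S, C ⊆ X → X ⊆ cl (B ∪ C) → cl (A ∪ X) ∩ cl (B ∪ X) = cl X) ↔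
      (∀ F : Finset S, ↑F ⊆ A → IndepOver cl C ↑F → IndepOver cl (B ∪ C) ↑F) := by
  let c : ClosureOperator (Set S) := .mk' cl hmono hsub fun A => (hidem A).le
  exact fun A B C =>
    ⟨fun h _ => c.indepOver_union_of_forall_closure_inter_eq hfin hexch h,
      fun h _ => c.closure_inter_eq_of_forall_indepOver_union hfin hexch h⟩
end

section
/- In a vector space V over a field K, with cl(A) the linear span of A, the relation A ⫫ᵃ_C B (span(A ∪ C) ∩ span(B ∪ C) = span(C)) coincides with A ⫫^cl_C B (every finite subset of A linearly independent over C remains linearly independent over B ∪ C); i.e., the span pregeometry is modular. -/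
open Submodule

theorem IndepOver.mono {S : Type*} {cl : Set S → Set S} (hcl : Monotone cl) {B X Y : Set S}
    (hXY : X ⊆ Y) (hY : IndepOver cl B Y) : IndepOver cl B X :=
  fun a ha hmem => hY a (hXY ha) (hcl (Set.union_subset_union_right B
    (Set.sdiff_subset_sdiff_left hXY)) hmem)

section Semiring

variable {R M : Type*} [Semiring R] [AddCommMonoid M] [Module R M]

theorem exists_finset_subset_mem_span_union {A C : Set M} {v : M} (hv : v ∈ span R (A ∪ C)) :
    ∃ F : Finset M, ↑F ⊆ A ∧ v ∈ span R (C ∪ F) := by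
  rw [span_union] at hv
  obtain ⟨w, hw, c, hc, rfl⟩ := mem_sup.mp hv
  obtain ⟨F, hFA, hwF⟩ := mem_span_finite_of_mem_span hw
  refine ⟨F, hFA, ?_⟩
  rw [span_union, add_comm]
  exact add_mem_sup hc hwF

theorem exists_subset_indepOver_mem_span_union [DecidableEq M] (C : Set M) (F : Finset M)
    {v : M} (hv : v ∈ span R (C ∪ F)) :
    ∃ G ⊆ F, IndepOver (fun s => (span R s : Set M)) C G ∧ v ∈ span R (C ∪ G) := by
  induction F using Finset.strongInduction with
  | H F ih =>
    by_cases hF : IndepOver (fun s => (span R s : Set M)) C F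
    · exact ⟨F, subset_rfl, hF, hv⟩
    simp only [IndepOver, not_forall, not_not] at hF
    obtain ⟨a, haF, ha⟩ := hF
    have hv' : v ∈ span R (C ∪ ↑(F.erase a)) := by
      rw [Finset.coe_erase, ← span_insert_eq_span ha]
      refine span_mono (fun x hx => ?_) hv
      by_cases hxa : x = a
      · exact .inl hxa
      · exact .inr (hx.imp_right fun hxF => ⟨hxF, hxa⟩)
    obtain ⟨G, hGF, hG, hvG⟩ := ih (F.erase a) (Finset.erase_ssubset haF) hv'
    exact ⟨G, hGF.trans (Finset.erase_subset a F), hG, hvG⟩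

end Semiring

section Ring

variable {R M : Type*} [Ring R] [AddCommGroup M] [Module R M]

theorem IndepOver.union_of_span_inf_span_le {A B C X : Set M}
    (h : span R (A ∪ C) ⊓ span R (B ∪ C) ≤ span R C) (hXA : X ⊆ A)
    (hX : IndepOver (fun s => (span R s : Set M)) C X) :
    IndepOver (fun s => (span R s : Set M)) (B ∪ C) X := by
  intro a haX hmem
  have hW : span R (X \ {a}) ≤ span R (A ∪ C) :=
    span_mono fun x hx => .inl (hXA hx.1)
  have ha : a ∈ (span R (X \ {a}) ⊔ span R (B ∪ C)) ⊓ span R (A ∪ C) :=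
    ⟨by rwa [sup_comm, ← span_union], subset_span (.inl (hXA haX))⟩
  rw [sup_inf_assoc_of_le _ hW, inf_comm] at ha
  refine hX a haX ?_
  rw [SetLike.mem_coe, span_union, sup_comm]
  exact sup_le_sup_left h _ ha

end Ring

section DivisionRing

variable {K V : Type*} [DivisionRing K] [AddCommGroup V] [Module K V]

theorem span_inf_span_union_le_of_indepOver [DecidableEq V] {C D : Set V} (hCD : C ⊆ D)
    (F : Finset V) (hF : IndepOver (fun s => (span K s : Set V)) D F) :
    span K D ⊓ span K (C ∪ F) ≤ span K C := by
  induction F using Finset.induction_on with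
  | empty => simp
  | insert a F haF ih =>
    rintro v ⟨hvD, hvF⟩
    refine ih (hF.mono (fun _ _ hs => span_mono hs) (Finset.coe_subset.mpr
      (Finset.subset_insert a F))) ⟨hvD, ?_⟩
    by_contra hv
    rw [Finset.coe_insert, Set.union_insert] at hvF
    refine hF a (Finset.mem_insert_self a F) (span_le.mpr ?_ (mem_span_insert_exchange hvF hv))
    rintro x (rfl | hxC | hxF)
    · exact span_mono Set.subset_union_left hvD
    · exact subset_span (.inl (hCD hxC))
    · exact subset_span (.inr ⟨Finset.mem_insert_of_mem hxF, fun hxa => haF (hxa ▸ hxF)⟩)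

theorem span_union_inf_span_union_le_of_forall_indepOver {A B C : Set V}
    (h : ∀ F : Finset V, ↑F ⊆ A → IndepOver (fun s => (span K s : Set V)) C ↑F →
      IndepOver (fun s => (span K s : Set V)) (B ∪ C) ↑F) :
    span K (A ∪ C) ⊓ span K (B ∪ C) ≤ span K C := by
  classical
  rintro v ⟨hvA, hvB⟩
  obtain ⟨F, hFA, hvF⟩ := exists_finset_subset_mem_span_union hvA
  obtain ⟨G, hGF, hG, hvG⟩ := exists_subset_indepOver_mem_span_union C F hvF
  have hGA : (G : Set V) ⊆ A := (Finset.coe_subset.mpr hGF).trans hFA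
  exact span_inf_span_union_le_of_indepOver Set.subset_union_right G (h G hGA hG) ⟨hvB, hvG⟩

end DivisionRing

/-- in a vector space with `cl` the linear span, `⫫ᵃ` coincides with
`⫫^cl`: the span pregeometry is modular. -/
theorem stmt15 {K V : Type*} [Field K] [AddCommGroup V] [Module K V]
    (cl : Set V → Set V) (cl_def : ∀ A : Set V, cl A = ↑(Submodule.span K A)) :
    ∀ A B C : Set V,
      (cl (A ∪ C) ∩ cl (B ∪ C) = cl C) ↔
      (∀ F : Finset V, ↑F ⊆ A → IndepOver cl C ↑F → IndepOver cl (B ∪ C) ↑F) := by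
  intro A B C
  obtain rfl : cl = fun s => (span K s : Set V) := funext cl_def
  have hge : span K C ≤ span K (A ∪ C) ⊓ span K (B ∪ C) :=
    le_inf (span_mono Set.subset_union_right) (span_mono Set.subset_union_right)
  rw [← coe_inf, SetLike.coe_set_eq, le_antisymm_iff, and_iff_left hge]
  exact ⟨fun h _ hFA => IndepOver.union_of_span_inf_span_le h hFA,
    span_union_inf_span_union_le_of_forall_indepOver⟩
end

section
/- Let (S, cl) be a pregeometry. Then the monotonisation of ⫫ᵃ with respect to cl equals its naive monotonisation: for all A, B, C, (A ⫫ᵃ_X B for all X with C ⊆ X ⊆ cl(B ∪ C)) if and only if (A ⫫ᵃ_D B for all D with C ⊆ D ⊆ B ∪ C). -/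
/-!
It suffices to show `cl (A ∪ X) ∩ cl (B ∪ C) ⊆ cl X` for `C ⊆ X ⊆ cl (B ∪ C)`, and by finite
character only for `X = D ∪ E` with `C ⊆ D ⊆ B ∪ C` and `E` finite. The points of `E` are added
one at a time, for all such `D` at once. By exchange, a point witnessing the failure for
`D ∪ insert g E` can first be replaced by a point `w ∈ B ∪ C` (at the cost of enlarging `D`), and
then, unless `w` already witnesses the failure for `D ∪ E`, by `g` witnessing the failure for
`insert w D ∪ E`.
-/

open Set

theorem exists_insert_mem_of_mem_union_finset {S : Type*} (cl : Set S → Set S) {x : S}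
    {Y : Set S} (F : Finset S) (hF : x ∈ cl (Y ∪ F)) (hY : x ∉ cl Y) :
    ∃ Z ⊆ (F : Set S), ∃ w ∈ F, x ∉ cl (Y ∪ Z) ∧ x ∈ cl (insert w (Y ∪ Z)) := by
  classical
  induction F using Finset.induction_on with
  | empty => simp_all
  | insert a F _ ih =>
    by_cases hx : x ∈ cl (Y ∪ F)
    · obtain ⟨Z, hZF, w, hwF, hxZ, hxw⟩ := ih hx
      exact ⟨Z, hZF.trans (by simp), w, Finset.mem_insert_of_mem hwF, hxZ, hxw⟩
    · refine ⟨F, by simp, a, Finset.mem_insert_self a F, hx, ?_⟩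
      rwa [Finset.coe_insert, union_insert] at hF

namespace ClosureOperator

variable {S : Type*} (c : ClosureOperator (Set S))

def HasExchange : Prop :=
  ∀ (Y : Set S) (a b : S), a ∈ c (insert b Y) → a ∉ c Y → b ∈ c (insert a Y)

def IsFinitary : Prop :=
  ∀ (Y : Set S) (x : S), x ∈ c Y → ∃ F : Finset S, ↑F ⊆ Y ∧ x ∈ c ↑F

variable {c}

theorem exists_mem_closure_union_notMem (hexch : c.HasExchange) (hfin : c.IsFinitary)
    {A Y W : Set S} {x : S} (hxW : x ∈ c W) (hxA : x ∈ c (A ∪ Y)) (hxY : x ∉ c Y) :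
    ∃ Z ⊆ W, ∃ w ∈ W, w ∈ c (A ∪ (Y ∪ Z)) ∧ w ∉ c (Y ∪ Z) := by
  obtain ⟨F, hFW, hxF⟩ := hfin W x hxW
  obtain ⟨Z, hZF, w, hwF, hxZ, hxw⟩ :=
    exists_insert_mem_of_mem_union_finset c F (c.monotone subset_union_right hxF) hxY
  refine ⟨Z, hZF.trans hFW, w, hFW hwF, ?_, fun hw => hxZ ?_⟩
  · have hxZA : insert x (Y ∪ Z) ⊆ c (A ∪ (Y ∪ Z)) :=
      insert_subset (c.monotone (union_subset_union_right A subset_union_left) hxA)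
        (subset_union_right.trans (c.le_closure _))
    exact c.le_closure_iff.mp hxZA (hexch _ _ _ hxw hxZ)
  · exact c.le_closure_iff.mp (insert_subset hw (c.le_closure _)) hxw

theorem mem_closure_insert_of_mem_closure_insert (hexch : c.HasExchange)
    {A C D E W : Set S} {g w : S} (hg : g ∈ c W) (hw : w ∈ W) (hCD : C ⊆ D) (hDW : D ⊆ W)
    (hE : ∀ D, C ⊆ D → D ⊆ W → c (A ∪ (D ∪ E)) ∩ c W ⊆ c (D ∪ E))
    (hwA : w ∈ c (insert g (A ∪ (D ∪ E)))) : w ∈ c (insert g (D ∪ E)) := by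
  by_contra hwY
  have hwA' : w ∉ c (A ∪ (D ∪ E)) := fun h =>
    hwY (c.monotone (subset_insert _ _) (hE D hCD hDW ⟨h, c.le_closure W hw⟩))
  have hgA : g ∈ c (insert w (A ∪ (D ∪ E))) := hexch _ _ _ hwA hwA'
  have hgY : g ∉ c (D ∪ E) := fun h =>
    hwA' (c.le_closure_iff.mp (insert_subset (c.monotone subset_union_right h) (c.le_closure _)) hwA)
  have hgwY : g ∉ c (insert w (D ∪ E)) := fun h => hwY (hexch _ _ _ h hgY)
  have hwD := hE (insert w D) (hCD.trans (subset_insert _ _)) (insert_subset hw hDW)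
  rw [insert_union, union_insert] at hwD
  exact hgwY (hwD ⟨hgA, hg⟩)

theorem inter_closure_subset_insert (hexch : c.HasExchange) (hfin : c.IsFinitary)
    {A C E W : Set S} {g : S} (hg : g ∈ c W)
    (hE : ∀ D, C ⊆ D → D ⊆ W → c (A ∪ (D ∪ E)) ∩ c W ⊆ c (D ∪ E)) :
    ∀ D, C ⊆ D → D ⊆ W → c (A ∪ (D ∪ insert g E)) ∩ c W ⊆ c (D ∪ insert g E) := by
  rintro D hCD hDW x ⟨hxA, hxW⟩
  by_contra hx
  obtain ⟨Z, hZW, w, hwW, hwA, hwY⟩ := exists_mem_closure_union_notMem hexch hfin hxW hxA hx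
  have hDZ : D ∪ insert g E ∪ Z = insert g (D ∪ Z ∪ E) := by
    rw [union_insert, insert_union, union_right_comm]
  rw [hDZ, union_insert] at hwA
  rw [hDZ] at hwY
  exact hwY (mem_closure_insert_of_mem_closure_insert hexch hg hwW
    (hCD.trans subset_union_left) (union_subset hDW hZW) hE hwA)

theorem inter_closure_subset_union_finset (hexch : c.HasExchange) (hfin : c.IsFinitary)
    {A C W : Set S} (hN : ∀ D, C ⊆ D → D ⊆ W → c (A ∪ D) ∩ c W ⊆ c D)
    (E : Finset S) (hE : ↑E ⊆ c W) :
    ∀ D, C ⊆ D → D ⊆ W → c (A ∪ (D ∪ E)) ∩ c W ⊆ c (D ∪ E) := by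
  classical
  induction E using Finset.induction_on with
  | empty => simpa using hN
  | insert g E _ ih =>
    rw [Finset.coe_insert, insert_subset_iff] at hE
    rw [Finset.coe_insert]
    exact inter_closure_subset_insert hexch hfin hE.1 (ih hE.2)

theorem inter_closure_subset_of_subset_closure (hexch : c.HasExchange) (hfin : c.IsFinitary)
    {A C W X : Set S} (hCW : C ⊆ W) (hN : ∀ D, C ⊆ D → D ⊆ W → c (A ∪ D) ∩ c W ⊆ c D)
    (hCX : C ⊆ X) (hXW : X ⊆ c W) : c (A ∪ X) ∩ c W ⊆ c X := by
  classical
  rintro x ⟨hxA, hxW⟩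
  obtain ⟨F, hFAX, hxF⟩ := hfin _ x hxA
  let E := F.filter (· ∈ X)
  have hEX : ↑E ⊆ X := fun y hy => (Finset.mem_filter.mp hy).2
  have hFE : ↑F ⊆ A ∪ (C ∪ E) := fun y hy => by
    by_cases hyX : y ∈ X
    · exact Or.inr (Or.inr (Finset.mem_filter.mpr ⟨hy, hyX⟩))
    · exact Or.inl ((hFAX hy).resolve_right hyX)
  have hxE := inter_closure_subset_union_finset hexch hfin hN E (hEX.trans hXW) C subset_rfl hCW
    ⟨c.monotone hFE hxF, hxW⟩
  exact c.monotone (union_subset hCX hEX) hxE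

theorem forall_inter_closure_eq_iff (hexch : c.HasExchange) (hfin : c.IsFinitary)
    (A B C : Set S) :
    (∀ X : Set S, C ⊆ X → X ⊆ c (B ∪ C) → c (A ∪ X) ∩ c (B ∪ X) = c X) ↔
      (∀ D : Set S, C ⊆ D → D ⊆ B ∪ C → c (A ∪ D) ∩ c (B ∪ D) = c D) := by
  have hBX : ∀ X, C ⊆ X → X ⊆ c (B ∪ C) → c (B ∪ X) = c (B ∪ C) := fun X hCX hXK =>
    (c.le_closure_iff.mp (union_subset (subset_union_left.trans (c.le_closure _)) hXK)).antisymm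
      (c.monotone (union_subset_union_right B hCX))
  refine ⟨fun h D hCD hDBC => h D hCD (hDBC.trans (c.le_closure _)), fun h X hCX hXK => ?_⟩
  refine Subset.antisymm ?_
    (subset_inter (c.monotone subset_union_right) (c.monotone subset_union_right))
  rw [hBX X hCX hXK]
  refine inter_closure_subset_of_subset_closure hexch hfin subset_union_right
    (fun D hCD hDBC => ?_) hCX hXK
  rw [← hBX D hCD (hDBC.trans (c.le_closure _))]
  exact (h D hCD hDBC).subset

end ClosureOperator

/-- in a pregeometry, the monotonisation of `⫫ᵃ` with respect to `cl`
equals its naive monotonisation (with respect to the trivial closure operator). -/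
theorem stmt16 {S : Type*} (cl : Set S → Set S)
    (hsub : ∀ A : Set S, A ⊆ cl A)
    (hmono : ∀ A B : Set S, A ⊆ B → cl A ⊆ cl B)
    (hidem : ∀ A : Set S, cl (cl A) = cl A)
    (hfin : ∀ (A : Set S) (x : S), x ∈ cl A → ∃ F : Finset S, ↑F ⊆ A ∧ x ∈ cl ↑F)
    (hexch : ∀ (A : Set S) (a b : S), a ∈ cl (A ∪ {b}) → a ∉ cl A → b ∈ cl (A ∪ {a})) :
    ∀ A B C : Set S,
      (∀ X : Set S, C ⊆ X → X ⊆ cl (B ∪ C) → cl (A ∪ X) ∩ cl (B ∪ X) = cl X) ↔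
      (∀ D : Set S, C ⊆ D → D ⊆ B ∪ C → cl (A ∪ D) ∩ cl (B ∪ D) = cl D) := by
  let c : ClosureOperator (Set S) :=
    .mk' cl (fun A B => hmono A B) hsub fun A => (hidem A).le
  have hexch' : c.HasExchange := fun Y a b => by
    simp only [← union_singleton]
    exact hexch Y a b
  exact c.forall_inter_closure_eq_iff hexch' hfin
end
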